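/- arXiv:1711.07021 — 3 statements merged into one kernel-verified Lean document; each statement's English description precedes it below -/
import Mathlib

section
/- Let T be a tree on n ≥ 4 vertices that is not a path, and let u, v be the endpoints of a diametrical path in T. Let x be a pendant vertex of T distinct from u and v with unique neighbor y. If T' is the tree obtained from T by deleting the edge xy and adding the edge xu, then τ(T) < τ(T'). -/
open SimpleGraph Finset

noncomputable def ecc {V : Type*} [Fintype V] (G : SimpleGraph V) (v : V) : ℕ :=
  Finset.univ.sup (G.dist v)

noncomputable def tau {V : Type*} [Fintype V] (G : SimpleGraph V) : ℕ :=
  ∑ v, ecc G v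

noncomputable def gdiam {V : Type*} [Fintype V] (G : SimpleGraph V) : ℕ :=
  Finset.univ.sup (ecc G)

/-! Moving the leaf `x` next to `u` changes no distance between the other vertices. In a tree
the eccentricity of a vertex is attained at an end of any diametral path `u ⋯ v`, so for `w ≠ x`
the old distance from `w` to `x` is at most the new eccentricity of `w`. The new eccentricity of
`x` is at least `d(u, v) + 1`, which exceeds the diameter and hence the old eccentricity of `x`. -/

namespace SimpleGraph

variable {V : Type*} {G H : SimpleGraph V}

theorem Walk.IsPath.append_of_support_inter {a m b : V} {p : G.Walk a m} {q : G.Walk m b}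
    (hp : p.IsPath) (hq : q.IsPath) (hpq : ∀ t ∈ p.support, t ∈ q.support → t = m) :
    (p.append q).IsPath := by
  have hq' := hq.support_nodup
  rw [← q.cons_tail_support, List.nodup_cons] at hq'
  refine Walk.IsPath.mk' ?_
  rw [Walk.support_append]
  refine hp.support_nodup.append hq'.2 fun t htp htq => ?_
  obtain rfl := hpq t htp (q.cons_tail_support ▸ List.mem_cons_of_mem _ htq)
  exact hq'.1 htq

namespace IsTree

theorem length_eq_dist (hG : G.IsTree) {a b : V} {p : G.Walk a b} (hp : p.IsPath) :
    p.length = G.dist a b := by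
  obtain ⟨q, hq, hlen⟩ := hG.connected.exists_path_of_dist a b
  rw [(hG.existsUnique_path a b).unique hp hq, hlen]

theorem dist_add_dist_of_mem_support (hG : G.IsTree) {a b c : V} {p : G.Walk a b} (hp : p.IsPath)
    (hc : c ∈ p.support) : G.dist a c + G.dist c b = G.dist a b := by
  classical
  rw [← hG.length_eq_dist (hp.takeUntil hc), ← hG.length_eq_dist (hp.dropUntil hc),
    ← hG.length_eq_dist hp, ← Walk.length_append, p.take_spec hc]

theorem dist_add_dist_of_forall_dist_le (hG : G.IsTree) {w m c : V} {p : G.Walk m c}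
    (hp : p.IsPath) (hmin : ∀ t ∈ p.support, G.dist w m ≤ G.dist w t) :
    G.dist w m + G.dist m c = G.dist w c := by
  obtain ⟨q, hq, hqlen⟩ := hG.connected.exists_path_of_dist w m
  have hqp : (q.append p).IsPath := hq.append_of_support_inter hp fun t htq htp => by
    have hsplit := hG.dist_add_dist_of_mem_support hq htq
    have hle := hmin t htp
    exact hG.connected.dist_eq_zero_iff.mp (by omega : G.dist t m = 0)
  rw [← hG.length_eq_dist hqp, Walk.length_append, hqlen, hG.length_eq_dist hp]

theorem exists_mem_support_dist_add_dist (hG : G.IsTree) {a b : V} {p : G.Walk a b}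
    (hp : p.IsPath) (w : V) :
    ∃ m ∈ p.support,
      G.dist w m + G.dist m a = G.dist w a ∧ G.dist w m + G.dist m b = G.dist w b := by
  classical
  obtain ⟨m, hm, hmin⟩ := p.support.toFinset.exists_min_image (G.dist w) ⟨a, by simp⟩
  rw [List.mem_toFinset] at hm
  have hmin' : ∀ t ∈ p.support, G.dist w m ≤ G.dist w t :=
    fun t ht => hmin t (List.mem_toFinset.mpr ht)
  refine ⟨m, hm, ?_, ?_⟩
  · refine hG.dist_add_dist_of_forall_dist_le (hp.takeUntil hm).reverse fun t ht => ?_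
    rw [Walk.support_reverse, List.mem_reverse] at ht
    exact hmin' t (p.support_takeUntil_subset_support hm ht)
  · exact hG.dist_add_dist_of_forall_dist_le (hp.dropUntil hm)
      fun t ht => hmin' t (p.support_dropUntil_subset_support hm ht)

theorem dist_le_max_of_forall_dist_le (hG : G.IsTree) {u v : V}
    (hdiam : ∀ a b, G.dist a b ≤ G.dist u v) (w z : V) :
    G.dist w z ≤ max (G.dist w u) (G.dist w v) := by
  classical
  obtain ⟨P, hP, -⟩ := hG.connected.exists_path_of_dist u v
  obtain ⟨m, hm, hwu, hwv⟩ := hG.exists_mem_support_dist_add_dist hP w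
  obtain ⟨m', hm', hzu, hzv⟩ := hG.exists_mem_support_dist_add_dist hP z
  have huv := hG.dist_add_dist_of_mem_support hP hm'
  have hwz : G.dist w z ≤ G.dist w m + G.dist m m' + G.dist m' z := by
    have := hG.connected.dist_triangle (u := w) (v := m) (w := z)
    have := hG.connected.dist_triangle (u := m) (v := m') (w := z)
    omega
  have hzu_le := hdiam z u
  have hzv_le := hdiam z v
  -- `m'` lies between `u` and `m`, or between `m` and `v`, on the diametral path
  rw [← P.take_spec hm, Walk.mem_support_append_iff] at hm'
  rcases hm' with h | h
  · have hm'_mid := hG.dist_add_dist_of_mem_support (hP.takeUntil hm) h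
    simp only [G.dist_comm] at *
    omega
  · have hm'_mid := hG.dist_add_dist_of_mem_support (hP.dropUntil hm) h
    simp only [G.dist_comm] at *
    omega

end IsTree

theorem Walk.IsPath.notMem_support_of_subsingleton {x : V} (hx : (G.neighborSet x).Subsingleton) :
    ∀ {a b : V} {p : G.Walk a b}, p.IsPath → a ≠ x → b ≠ x → x ∉ p.support
  | _, _, .nil, _, ha, _ => by simpa using ha.symm
  | a, b, .cons (v := c) h q, hp, ha, hb => by
    rw [Walk.cons_isPath_iff] at hp
    rw [Walk.support_cons, List.mem_cons, not_or]
    refine ⟨ha.symm, ?_⟩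
    by_cases hc : c = x
    · subst hc
      have hnil : ¬q.Nil := Walk.not_nil_of_ne hb.symm
      have hsnd : q.snd = a := hx (q.adj_snd hnil) h.symm
      exact absurd (hsnd ▸ q.getVert_mem_support 1) hp.2
    · exact hp.1.notMem_support_of_subsingleton hx hc hb

theorem Reachable.exists_walk_length_eq_dist_of_adj {x a b : V}
    (hx : (G.neighborSet x).Subsingleton)
    (hGH : ∀ s t, s ≠ x → t ≠ x → G.Adj s t → H.Adj s t)
    (hr : G.Reachable a b) (ha : a ≠ x) (hb : b ≠ x) :
    ∃ q : H.Walk a b, q.length = G.dist a b := by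
  obtain ⟨p, hp, hlen⟩ := hr.exists_path_of_dist
  have hxp := hp.notMem_support_of_subsingleton hx ha hb
  refine ⟨p.transfer H fun e he => ?_, by rw [Walk.length_transfer, hlen]⟩
  induction e using Sym2.ind with
  | h s t =>
    exact hGH s t (ne_of_mem_of_not_mem (p.fst_mem_support_of_mem_edges he) hxp)
      (ne_of_mem_of_not_mem (p.snd_mem_support_of_mem_edges he) hxp) (p.adj_of_mem_edges he)

theorem Reachable.dist_eq_of_adj_iff {x a b : V} (hGx : (G.neighborSet x).Subsingleton)
    (hHx : (H.neighborSet x).Subsingleton)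
    (hGH : ∀ s t, s ≠ x → t ≠ x → (G.Adj s t ↔ H.Adj s t))
    (hr : G.Reachable a b) (ha : a ≠ x) (hb : b ≠ x) : H.dist a b = G.dist a b := by
  obtain ⟨q, hq⟩ :=
    hr.exists_walk_length_eq_dist_of_adj hGx (fun s t hs ht => (hGH s t hs ht).1) ha hb
  obtain ⟨p, hp⟩ := Reachable.exists_walk_length_eq_dist_of_adj hHx
    (fun s t hs ht => (hGH s t hs ht).2) ⟨q⟩ ha hb
  exact le_antisymm (hq ▸ dist_le q) (hp ▸ dist_le p)

theorem Reachable.dist_add_one_le_dist {x n w : V} (hx : G.neighborSet x = {n})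
    (hr : G.Reachable x w) (hw : x ≠ w) : G.dist n w + 1 ≤ G.dist x w := by
  obtain ⟨p, hp⟩ := hr.exists_walk_length_eq_dist
  cases p with
  | nil => exact absurd rfl hw
  | cons h q =>
    have hn : _ ∈ G.neighborSet x := h
    rw [hx, Set.mem_singleton_iff] at hn
    subst hn
    simpa [← hp] using dist_le q

def moveLeaf (G : SimpleGraph V) (x y u : V) : SimpleGraph V :=
  fromEdgeSet ((G.edgeSet \ {s(x, y)}) ∪ {s(x, u)})

theorem moveLeaf_adj_of_ne {x y u a b : V} (ha : a ≠ x) (hb : b ≠ x) :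
    (G.moveLeaf x y u).Adj a b ↔ G.Adj a b := by
  simpa [moveLeaf, ha, hb] using Adj.ne

theorem neighborSet_moveLeaf {x y u : V} (hx : G.neighborSet x = {y}) (hxu : x ≠ u) :
    (G.moveLeaf x y u).neighborSet x = {u} := by
  ext b
  have hb : G.Adj x b ↔ b = y := Set.ext_iff.mp hx b
  simp only [moveLeaf, mem_neighborSet, fromEdgeSet_adj, Set.mem_union, Set.mem_sdiff,
    mem_edgeSet, hb, Set.mem_singleton_iff, Sym2.eq_iff]
  grind

namespace IsTree

variable {x y u : V}

theorem dist_moveLeaf (hG : G.IsTree) (hx : G.neighborSet x = {y}) (hxu : x ≠ u) {a b : V}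
    (ha : a ≠ x) (hb : b ≠ x) :
    (G.moveLeaf x y u).dist a b = G.dist a b :=
  (hG.connected a b).dist_eq_of_adj_iff (hx ▸ Set.subsingleton_singleton)
    (neighborSet_moveLeaf hx hxu ▸ Set.subsingleton_singleton)
    (fun _ _ hs ht => (moveLeaf_adj_of_ne hs ht).symm) ha hb

theorem dist_add_one_le_dist_moveLeaf (hG : G.IsTree) (hx : G.neighborSet x = {y})
    (hxu : x ≠ u) {w : V} (hxw : x ≠ w) :
    G.dist u w + 1 ≤ (G.moveLeaf x y u).dist x w := by
  have hx' := neighborSet_moveLeaf hx hxu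
  obtain ⟨q, -⟩ := (hG.connected u w).exists_walk_length_eq_dist_of_adj
    (hx ▸ Set.subsingleton_singleton) (fun _ _ hs ht => (moveLeaf_adj_of_ne hs ht).2)
    hxu.symm hxw.symm
  have hxu' : (G.moveLeaf x y u).Adj x u := by simp [← mem_neighborSet, hx']
  rw [← hG.dist_moveLeaf hx hxu hxu.symm hxw.symm]
  exact (hxu'.reachable.trans ⟨q⟩).dist_add_one_le_dist hx' hxw

end IsTree

end SimpleGraph

theorem dist_le_ecc {V : Type*} [Fintype V] (G : SimpleGraph V) (v w : V) :
    G.dist v w ≤ ecc G v :=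
  Finset.le_sup (Finset.mem_univ w)

theorem ecc_le_gdiam {V : Type*} [Fintype V] (G : SimpleGraph V) (v : V) : ecc G v ≤ gdiam G :=
  Finset.le_sup (Finset.mem_univ v)

namespace SimpleGraph.IsTree

variable {V : Type*} [Fintype V] {G : SimpleGraph V} {x y u v : V}

theorem ecc_le_ecc_moveLeaf (hG : G.IsTree) (hx : G.neighborSet x = {y}) (hxu : x ≠ u)
    (hxv : x ≠ v) (hdiam : ∀ a b, G.dist a b ≤ G.dist u v) {w : V} (hw : w ≠ x) :
    ecc G w ≤ ecc (G.moveLeaf x y u) w := by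
  refine Finset.sup_le fun z _ => ?_
  rcases eq_or_ne z x with rfl | hz
  · calc G.dist w z ≤ max (G.dist w u) (G.dist w v) :=
          hG.dist_le_max_of_forall_dist_le hdiam w z
      _ = max ((G.moveLeaf z y u).dist w u) ((G.moveLeaf z y u).dist w v) := by
        rw [hG.dist_moveLeaf hx hxu hw hxu.symm, hG.dist_moveLeaf hx hxu hw hxv.symm]
      _ ≤ ecc (G.moveLeaf z y u) w := max_le (dist_le_ecc _ w u) (dist_le_ecc _ w v)
  · exact hG.dist_moveLeaf hx hxu hw hz ▸ dist_le_ecc _ w z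

theorem ecc_lt_ecc_moveLeaf (hG : G.IsTree) (hx : G.neighborSet x = {y}) (hxu : x ≠ u)
    (hxv : x ≠ v) (hd : G.dist u v = gdiam G) : ecc G x < ecc (G.moveLeaf x y u) x :=
  calc ecc G x ≤ G.dist u v := hd ▸ ecc_le_gdiam G x
    _ < (G.moveLeaf x y u).dist x v := hG.dist_add_one_le_dist_moveLeaf hx hxu hxv
    _ ≤ ecc (G.moveLeaf x y u) x := dist_le_ecc _ x v

end SimpleGraph.IsTree

theorem stmt7_general {V : Type*} [Fintype V] (T : SimpleGraph V)
    (hT : T.IsTree)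
    (u v x y : V) (hd : T.dist u v = gdiam T)
    (hxu : x ≠ u) (hxv : x ≠ v)
    (hpend : (T.neighborSet x).ncard = 1) (hxy : T.Adj x y) :
    tau T < tau (SimpleGraph.fromEdgeSet ((T.edgeSet \ {s(x, y)}) ∪ {s(x, u)})) := by
  change tau T < tau (T.moveLeaf x y u)
  have hleaf : T.neighborSet x = {y} := by
    obtain ⟨n, hn⟩ := Set.ncard_eq_one.mp hpend
    rwa [Set.mem_singleton_iff.mp (hn ▸ hxy : y ∈ ({n} : Set V))]
  have hdiam : ∀ a b, T.dist a b ≤ T.dist u v :=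
    fun a b => hd ▸ (dist_le_ecc T a b).trans (ecc_le_gdiam T a)
  have hecc_x := hT.ecc_lt_ecc_moveLeaf hleaf hxu hxv hd
  refine Finset.sum_lt_sum (fun w _ => ?_) ⟨x, Finset.mem_univ x, hecc_x⟩
  rcases eq_or_ne w x with rfl | hw
  · exact hecc_x.le
  · exact hT.ecc_le_ecc_moveLeaf hleaf hxu hxv hdiam hw

theorem stmt7 {V : Type*} [Fintype V] (T : SimpleGraph V)
    (hn : 4 ≤ Fintype.card V) (hT : T.IsTree)
    (hnotpath : ¬ Nonempty (T ≃g SimpleGraph.pathGraph (Fintype.card V)))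
    (u v x y : V) (hd : T.dist u v = gdiam T)
    (hxu : x ≠ u) (hxv : x ≠ v)
    (hpend : (T.neighborSet x).ncard = 1) (hxy : T.Adj x y) :
    tau T < tau (SimpleGraph.fromEdgeSet ((T.edgeSet \ {s(x, y)}) ∪ {s(x, u)})) :=
  stmt7_general T hT u v x y hd hxu hxv hpend hxy
end

section
/- Let U be a connected unicyclic graph on n ≥ 4 vertices (a connected graph with exactly n edges). Then τ(U) ≥ 2n − 1, with equality for the graph obtained from the star S_n by joining two leaves by an edge. -/
open SimpleGraph Finset

/-- The star on `Fin n` with an extra edge joining the leaves 1 and 2. -/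
def U₁ (n : ℕ) : SimpleGraph (Fin n) :=
  SimpleGraph.fromRel (fun i j => i.val = 0 ∨ (i.val = 1 ∧ j.val = 2))

/-! In a connected graph a vertex has eccentricity `1` exactly when it is universal, and every
other vertex has eccentricity at least `2`; hence `τ(G) + #universal ≥ 2|V|`, with equality as soon
as some vertex is universal, since then all eccentricities are at most `2`. Two universal vertices
already force `2|V| - 3` edges, so a unicyclic graph on `n ≥ 4` vertices has at most one of them
and `τ ≥ 2n - 1`, while the star with one extra edge has exactly one universal vertex. -/

namespace SimpleGraph

variable {V : Type*} [Fintype V] {G : SimpleGraph V} {c u v : V}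

lemma dist_le_ecc (G : SimpleGraph V) (v w : V) : G.dist v w ≤ ecc G v :=
  le_sup (mem_univ w)

lemma ecc_le_iff {k : ℕ} : ecc G v ≤ k ↔ ∀ w, G.dist v w ≤ k := by
  simp [ecc]

lemma Connected.one_le_ecc [Nontrivial V] (hG : G.Connected) (v : V) : 1 ≤ ecc G v :=
  let ⟨w, hw⟩ := exists_ne v
  (hG.pos_dist_of_ne hw.symm).trans_le (G.dist_le_ecc v w)

lemma Connected.isUniversal_of_ecc_le_one (hG : G.Connected) (h : ecc G v ≤ 1) :
    G.IsUniversal v := fun _ hvw =>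
  dist_eq_one_iff_adj.mp <| ((G.dist_le_ecc v _).trans h).antisymm (hG.pos_dist_of_ne hvw)

lemma Connected.two_le_ecc_of_not_isUniversal (hG : G.Connected) (h : ¬G.IsUniversal v) :
    2 ≤ ecc G v := by
  by_contra! h'
  exact h (hG.isUniversal_of_ecc_le_one (by omega))

lemma IsUniversal.ecc_le_one (h : G.IsUniversal v) : ecc G v ≤ 1 := by
  refine ecc_le_iff.mpr fun w => ?_
  rcases eq_or_ne v w with rfl | hvw
  · simp
  · exact (dist_eq_one_iff_adj.mpr (h hvw)).le

lemma IsUniversal.ecc_le_two (hc : G.IsUniversal c) (v : V) : ecc G v ≤ 2 := by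
  refine ecc_le_iff.mpr fun w => ?_
  have hcv : G.dist c v ≤ 1 := (G.dist_le_ecc c v).trans hc.ecc_le_one
  have hcw : G.dist c w ≤ 1 := (G.dist_le_ecc c w).trans hc.ecc_le_one
  calc G.dist v w ≤ G.dist v c + G.dist c w := (Connected.of_isUniversal hc).dist_triangle
    _ ≤ 2 := by rw [dist_comm]; omega

open Classical in
lemma sum_ite_isUniversal (G : SimpleGraph V) :
    (∑ v, if G.IsUniversal v then 1 else 0) = G.universalVerts.ncard := by
  rw [sum_boole, Nat.cast_id, ← Set.ncard_coe_finset, coe_filter]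
  simp [universalVerts]

theorem Connected.two_mul_card_le_tau_add_ncard_universalVerts [Nontrivial V]
    (hG : G.Connected) : 2 * Fintype.card V ≤ tau G + G.universalVerts.ncard := by
  classical
  rw [← sum_ite_isUniversal, tau, ← sum_add_distrib, mul_comm, ← smul_eq_mul, ← card_univ,
    ← sum_const]
  refine sum_le_sum fun v _ => ?_
  split_ifs with hv
  · have := hG.one_le_ecc v
    omega
  · have := hG.two_le_ecc_of_not_isUniversal hv
    omega

theorem IsUniversal.tau_add_ncard_universalVerts [Nontrivial V] (hc : G.IsUniversal c) :
    tau G + G.universalVerts.ncard = 2 * Fintype.card V := by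
  classical
  rw [← sum_ite_isUniversal, tau, ← sum_add_distrib, mul_comm, ← smul_eq_mul, ← card_univ,
    ← sum_const]
  refine sum_congr rfl fun v _ => ?_
  have hG := Connected.of_isUniversal hc
  split_ifs with hv
  · have := hG.one_le_ecc v
    have := hv.ecc_le_one
    omega
  · have := hG.two_le_ecc_of_not_isUniversal hv
    have := hc.ecc_le_two v
    omega

theorem two_mul_card_le_ncard_edgeSet_add_three (hu : G.IsUniversal u) (hv : G.IsUniversal v)
    (huv : u ≠ v) : 2 * Fintype.card V ≤ G.edgeSet.ncard + 3 := by
  classical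
  have hothers : ∀ w ∈ univ \ {u, v}, 2 ≤ G.degree w := by
    intro w hw
    obtain ⟨hwu, hwv⟩ : w ≠ u ∧ w ≠ v := by simpa [not_or] using hw
    have hsub : {u, v} ⊆ G.neighborFinset w := by
      simp [insert_subset_iff, (hu hwu.symm).symm, (hv hwv.symm).symm]
    simpa [card_pair huv] using card_le_card hsub
  have hrest : 2 * (Fintype.card V - 2) ≤ ∑ w ∈ univ \ {u, v}, G.degree w := by
    simpa [card_sdiff_of_subset, card_pair huv, mul_comm] using card_nsmul_le_sum _ _ _ hothers
  have hsum : ∑ w ∈ univ \ {u, v}, G.degree w + (G.degree u + G.degree v) =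
      2 * G.edgeSet.ncard := by
    rw [← sum_pair (f := fun w => G.degree w) huv, sum_sdiff (subset_univ _),
      sum_degrees_eq_twice_card_edges, ← coe_edgeFinset, Set.ncard_coe_finset]
  have hdegu := (G.degree_eq_card_sub_one u).mpr hu
  have hdegv := (G.degree_eq_card_sub_one v).mpr hv
  have : 2 ≤ Fintype.card V := Fintype.one_lt_card_iff.mpr ⟨u, v, huv⟩
  omega

lemma ncard_universalVerts_le_one (hE : G.edgeSet.ncard + 3 < 2 * Fintype.card V) :
    G.universalVerts.ncard ≤ 1 :=
  (Set.ncard_le_one ..).mpr fun _ hu _ hv => by_contra fun huv =>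
    (two_mul_card_le_ncard_edgeSet_add_three hu hv huv).not_gt hE

theorem Connected.two_mul_card_sub_one_le_tau (hG : G.Connected)
    (hE : G.edgeSet.ncard + 3 < 2 * Fintype.card V) : 2 * Fintype.card V - 1 ≤ tau G := by
  have : Nontrivial V := Fintype.one_lt_card_iff_nontrivial.mp (by omega)
  have := hG.two_mul_card_le_tau_add_ncard_universalVerts
  have := ncard_universalVerts_le_one hE
  omega

end SimpleGraph

lemma U₁_adj {n : ℕ} {i j : Fin n} :
    (U₁ n).Adj i j ↔ i ≠ j ∧ (i.val = 0 ∨ j.val = 0 ∨ (i.val = 1 ∧ j.val = 2) ∨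
      (j.val = 1 ∧ i.val = 2)) := by
  simp only [U₁, fromRel_adj]
  tauto

lemma U₁_universalVerts {n : ℕ} (hn : 4 ≤ n) :
    (U₁ n).universalVerts = {⟨0, by omega⟩} := by
  ext v
  simp only [universalVerts, Set.mem_ofPred_eq, Set.mem_singleton_iff, Fin.ext_iff]
  refine ⟨fun hv => ?_, fun hv w hvw => U₁_adj.mpr ⟨hvw, Or.inl hv⟩⟩
  by_contra hv0
  obtain ⟨w, hvw, hnadj⟩ : ∃ w : Fin n, v ≠ w ∧ ¬(U₁ n).Adj v w := by
    by_cases hv2 : v.val ≤ 2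
    · exact ⟨⟨3, by omega⟩, by simp only [Ne, U₁_adj, Fin.ext_iff]; omega⟩
    · exact ⟨⟨1, by omega⟩, by simp only [Ne, U₁_adj, Fin.ext_iff]; omega⟩
  exact hnadj (hv hvw)

theorem stmt11 (n : ℕ) (hn : 4 ≤ n) :
    (∀ U : SimpleGraph (Fin n), U.Connected → U.edgeSet.ncard = n → 2 * n - 1 ≤ tau U) ∧
    tau (U₁ n) = 2 * n - 1 := by
  refine ⟨fun U hU hE => ?_, ?_⟩
  · simpa using hU.two_mul_card_sub_one_le_tau (by simp only [hE, Fintype.card_fin]; omega)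
  · have : Nontrivial (Fin n) := Fin.nontrivial_iff_two_le.mpr (by omega)
    have hcenter : (U₁ n).IsUniversal ⟨0, by omega⟩ :=
      show _ ∈ (U₁ n).universalVerts by rw [U₁_universalVerts hn]; rfl
    have := hcenter.tau_add_ncard_universalVerts
    rw [U₁_universalVerts hn, Set.ncard_singleton, Fintype.card_fin] at this
    omega
end

section
/- Let G be a connected graph containing a cycle C of length k. Then any diametrical path (a shortest path whose length equals diam(G)) contains at most ⌊k/2⌋ + 1 vertices of C and at most ⌊k/2⌋ edges of C. -/
open SimpleGraph Finset

/-
Index the geodesic `p` by `i ↦ p.getVert i`. Along a geodesic, the distance between the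
`i`-th and `j`-th vertices is exactly `|i - j|`, while any two vertices of a closed walk of
length `k` are at distance at most `k / 2` (go around either way). Hence the indices of the
vertices of `p` lying on `c` fill a window of `k / 2 + 1` consecutive integers, and the
indices of the common edges, whose two endpoints both lie on `c`, a window of `k / 2`.
-/

theorem Finset.card_le_of_forall_lt_add {s : Finset ℕ} {d : ℕ}
    (h : ∀ i ∈ s, ∀ j ∈ s, j < i + d) : #s ≤ d := by
  rcases s.eq_empty_or_nonempty with rfl | hs
  · simp
  calc #s ≤ #(Ico (s.min' hs) (s.min' hs + d)) :=
        card_le_card fun j hj ↦ mem_Ico.2 ⟨s.min'_le j hj, h _ (s.min'_mem hs) j hj⟩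
    _ = d := by simp

namespace SimpleGraph.Walk

variable {V : Type*} {G : SimpleGraph V}

lemma dist_getVert_le {u v : V} (p : G.Walk u v) {i j : ℕ} (hij : i ≤ j) :
    G.dist (p.getVert i) (p.getVert j) ≤ j - i := by
  have h := dist_le ((p.drop i).take (j - i))
  rw [take_length, drop_getVert, Nat.add_sub_cancel' hij] at h
  omega

lemma dist_getVert_eq_of_length_eq_dist {u v : V} (p : G.Walk u v)
    (hp : p.length = G.dist u v) {i j : ℕ} (hij : i ≤ j) (hj : j ≤ p.length) :
    G.dist (p.getVert i) (p.getVert j) = j - i := by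
  have hu : G.dist u (p.getVert i) ≤ i := (dist_le (p.take i)).trans (by simp)
  have hv : G.dist (p.getVert j) v ≤ p.length - j := (dist_le (p.drop j)).trans (by simp)
  have htri : G.dist u v ≤ G.dist u (p.getVert i) +
      (G.dist (p.getVert i) (p.getVert j) + G.dist (p.getVert j) v) :=
    (Reachable.dist_triangle_left ⟨p.take i⟩ v).trans
      (Nat.add_le_add_left (Reachable.dist_triangle_right ⟨p.drop j⟩ _) _)
  have := p.dist_getVert_le hij
  omega

lemma two_mul_dist_le_length_of_mem_support {x a b : V} (c : G.Walk x x)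
    (ha : a ∈ c.support) (hb : b ∈ c.support) : 2 * G.dist a b ≤ c.length := by
  suffices key : ∀ i j, i ≤ j → j ≤ c.length →
      2 * G.dist (c.getVert i) (c.getVert j) ≤ c.length by
    obtain ⟨i, rfl, hi⟩ := mem_support_iff_exists_getVert.1 ha
    obtain ⟨j, rfl, hj⟩ := mem_support_iff_exists_getVert.1 hb
    rcases le_total i j with hij | hji
    · exact key i j hij hj
    · rw [dist_comm]; exact key j i hji hi
  intro i j hij hj
  have hforward := c.dist_getVert_le hij
  have hback : G.dist (c.getVert j) (c.getVert i) ≤ (c.length - j) + i :=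
    calc G.dist (c.getVert j) (c.getVert i)
        ≤ G.dist (c.getVert j) x + G.dist x (c.getVert i) :=
          Reachable.dist_triangle_left ⟨c.drop j⟩ _
      _ ≤ (c.length - j) + i := by
          gcongr
          · exact (dist_le (c.drop j)).trans (by simp)
          · exact (dist_le (c.take i)).trans (by simp)
  rw [dist_comm] at hback
  omega

lemma le_add_half_length_of_getVert_mem_support {u v x : V} (p : G.Walk u v)
    (hp : p.length = G.dist u v) (c : G.Walk x x) {i j : ℕ} (hj : j ≤ p.length)
    (hi : p.getVert i ∈ c.support) (hj' : p.getVert j ∈ c.support) :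
    j ≤ i + c.length / 2 := by
  rcases le_or_gt i j with hij | hji
  · have := p.dist_getVert_eq_of_length_eq_dist hp hij hj
    have := c.two_mul_dist_le_length_of_mem_support hi hj'
    omega
  · omega

variable [DecidableEq V] {u v x : V} (c : G.Walk x x) {p : G.Walk u v}

lemma card_support_inter_le_of_length_eq_dist (hp : p.length = G.dist u v) :
    #(c.support.toFinset ∩ p.support.toFinset) ≤ c.length / 2 + 1 := by
  set I := {i ∈ range (p.length + 1) | p.getVert i ∈ c.support}
  have hsub : c.support.toFinset ∩ p.support.toFinset ⊆ I.image p.getVert := by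
    intro a ha
    simp only [mem_inter, List.mem_toFinset] at ha
    obtain ⟨i, rfl, hi⟩ := mem_support_iff_exists_getVert.1 ha.2
    exact mem_image_of_mem _ (by simp [I, Nat.lt_succ_of_le hi, ha.1])
  refine (card_le_card hsub).trans (card_image_le.trans (card_le_of_forall_lt_add ?_))
  intro i hi j hj
  simp only [I, mem_filter, mem_range] at hi hj
  have := p.le_add_half_length_of_getVert_mem_support hp c (by omega) hi.2 hj.2
  omega

lemma card_edges_inter_le_of_length_eq_dist (hp : p.length = G.dist u v) :
    #(c.edges.toFinset ∩ p.edges.toFinset) ≤ c.length / 2 := by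
  set J := {i ∈ range p.length | s(p.getVert i, p.getVert (i + 1)) ∈ c.edges}
  have hsub : c.edges.toFinset ∩ p.edges.toFinset ⊆
      J.image fun i ↦ s(p.getVert i, p.getVert (i + 1)) := by
    intro e he
    simp only [mem_inter, List.mem_toFinset] at he
    obtain ⟨i, hi, rfl⟩ := List.mem_iff_getElem.1 he.2
    rw [getElem_edges] at he ⊢
    exact mem_image_of_mem _ (by simpa [J, he.1] using hi)
  refine (card_le_card hsub).trans (card_image_le.trans (card_le_of_forall_lt_add ?_))
  intro i hi j hj
  simp only [J, mem_filter, mem_range] at hi hj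
  have := p.le_add_half_length_of_getVert_mem_support hp c hj.1
    (c.fst_mem_support_of_mem_edges hi.2) (c.snd_mem_support_of_mem_edges hj.2)
  omega

end SimpleGraph.Walk

theorem stmt16_general {V : Type*} [DecidableEq V] (G : SimpleGraph V) (k : ℕ)
    (u v x : V) (c : G.Walk x x) (hk : c.length = k)
    (p : G.Walk u v) (hshort : p.length = G.dist u v) :
    (c.support.toFinset ∩ p.support.toFinset).card ≤ k / 2 + 1 ∧
    (c.edges.toFinset ∩ p.edges.toFinset).card ≤ k / 2 :=
  hk ▸ ⟨c.card_support_inter_le_of_length_eq_dist hshort,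
    c.card_edges_inter_le_of_length_eq_dist hshort⟩

theorem stmt16 {V : Type*} [Fintype V] [DecidableEq V] (G : SimpleGraph V) (k : ℕ)
    (u v x : V) (c : G.Walk x x) (hc : c.IsCycle) (hk : c.length = k)
    (p : G.Walk u v) (hp : p.IsPath) (hshort : p.length = G.dist u v)
    (hdiam : p.length = gdiam G) :
    (c.support.toFinset ∩ p.support.toFinset).card ≤ k / 2 + 1 ∧
    (c.edges.toFinset ∩ p.edges.toFinset).card ≤ k / 2 :=
  stmt16_general G k u v x c hk p hshort
end
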